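/- Let k = 2ℓ+1 be odd and F the k-dimensional Lyness map with a ≥ 0. Define the polynomial Z(x) = Π_{j=0}^{ℓ} x_{2j+1}(x_{2j+1}+1) − (a + Σ_{i=1}^{k} x_i)·Π_{j=1}^{ℓ} x_{2j}(x_{2j}+1). Then for all x in the positive orthant, Z(F(x)) = det(DF(x))·Z(x), where det(DF(x)) = −(a + x_2 + ... + x_k)/x_1². -/
import Mathlib


/-- for odd `k = 2ℓ+1`, `Z(F(x)) = det(DF(x))·Z(x)` where
`det(DF(x)) = −(a + x₂ + ⋯ + x_k)/x₁²`. -/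
theorem lyness_Z_covariant (l : ℕ) (hl : 1 ≤ l) (a : ℝ) (ha : 0 ≤ a)
    (F : (Fin (2 * l + 1) → ℝ) → (Fin (2 * l + 1) → ℝ))
    (hF : ∀ x : Fin (2 * l + 1) → ℝ, ∀ i : Fin (2 * l + 1),
      F x i = if h : (i : ℕ) + 1 < 2 * l + 1 then x ⟨(i : ℕ) + 1, h⟩
              else (a + (∑ j, x j) - x ⟨0, by omega⟩) / x ⟨0, by omega⟩)
    (Z : (Fin (2 * l + 1) → ℝ) → ℝ)
    (hZ : ∀ x : Fin (2 * l + 1) → ℝ, Z x =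
      (∏ j : Fin (l + 1),
          (x ⟨2 * (j : ℕ), by have := j.isLt; omega⟩ *
            (x ⟨2 * (j : ℕ), by have := j.isLt; omega⟩ + 1)))
        - (a + ∑ j, x j) *
          ∏ j : Fin l,
            (x ⟨2 * (j : ℕ) + 1, by have := j.isLt; omega⟩ *
              (x ⟨2 * (j : ℕ) + 1, by have := j.isLt; omega⟩ + 1)))
    (x : Fin (2 * l + 1) → ℝ) (hx : ∀ i, 0 < x i) :
    Z (F x) = (-(a + (∑ j, x j) - x ⟨0, by omega⟩) / (x ⟨0, by omega⟩) ^ 2) * Z x := by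
  have hx0 : x ⟨0, by omega⟩ ≠ 0 := ne_of_gt (hx _)
  -- F on non-last indices
  have hk : ∀ (n : ℕ) (h : n + 1 < 2*l+1), F x ⟨n, by omega⟩ = x ⟨n+1, h⟩ := by
    intro n h
    rw [hF]
    exact dif_pos h
  -- F on the last index
  have hlast : F x ⟨2*l, by omega⟩ =
      (a + (∑ j, x j) - x ⟨0, by omega⟩) / x ⟨0, by omega⟩ := by
    rw [hF]
    exact dif_neg (by simp)
  -- sum of F x
  have hsum : (∑ j, F x j) =
      (∑ j, x j) - x ⟨0, by omega⟩ +
        (a + (∑ j, x j) - x ⟨0, by omega⟩) / x ⟨0, by omega⟩ := by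
    rw [Fin.sum_univ_castSucc]
    have h1 : ∀ i : Fin (2*l), F x i.castSucc = x i.succ :=
      fun i => hk i.val (by omega)
    have h2 : F x (Fin.last (2*l)) =
        (a + (∑ j, x j) - x ⟨0, by omega⟩) / x ⟨0, by omega⟩ := hlast
    rw [Fintype.sum_congr _ _ h1, h2]
    have h3 : (∑ j, x j) = x 0 + ∑ i : Fin (2*l), x i.succ := Fin.sum_univ_succ x
    have h4 : x (0 : Fin (2*l+1)) = x ⟨0, by omega⟩ := by norm_num
    rw [h3, h4]; ring
  -- even product of F x
  have hA : (∏ j : Fin (l + 1),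
          (F x ⟨2 * (j : ℕ), by have := j.isLt; omega⟩ *
            (F x ⟨2 * (j : ℕ), by have := j.isLt; omega⟩ + 1)))
      = (∏ j : Fin l,
            (x ⟨2 * (j : ℕ) + 1, by have := j.isLt; omega⟩ *
              (x ⟨2 * (j : ℕ) + 1, by have := j.isLt; omega⟩ + 1))) *
        (((a + (∑ j, x j) - x ⟨0, by omega⟩) / x ⟨0, by omega⟩) *
          ((a + (∑ j, x j) - x ⟨0, by omega⟩) / x ⟨0, by omega⟩ + 1)) := by
    rw [Fin.prod_univ_castSucc]
    congr 1
    · apply Finset.prod_congr rfl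
      intro j _
      have h' : F x ⟨2 * ((j.castSucc : Fin (l+1)) : ℕ), by have := j.castSucc.isLt; omega⟩
          = x ⟨2 * (j : ℕ) + 1, by have := j.isLt; omega⟩ :=
        hk (2 * (j : ℕ)) (by have := j.isLt; omega)
      rw [h']
    · have : F x ⟨2 * ((Fin.last l : Fin (l+1)) : ℕ), by have := (Fin.last l).isLt; omega⟩
          = F x ⟨2*l, by omega⟩ := rfl
      rw [this, hlast]
  -- odd product of F x
  have hB : (∏ j : Fin l,
            (F x ⟨2 * (j : ℕ) + 1, by have := j.isLt; omega⟩ *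
              (F x ⟨2 * (j : ℕ) + 1, by have := j.isLt; omega⟩ + 1)))
      = ∏ j : Fin l,
            (x ⟨2 * (j : ℕ) + 2, by have := j.isLt; omega⟩ *
              (x ⟨2 * (j : ℕ) + 2, by have := j.isLt; omega⟩ + 1)) := by
    apply Finset.prod_congr rfl
    intro j _
    have := hk (2 * (j : ℕ) + 1) (by have := j.isLt; omega)
    rw [this]
  -- even product of x splits first factor
  have hC : (∏ j : Fin (l + 1),
          (x ⟨2 * (j : ℕ), by have := j.isLt; omega⟩ *
            (x ⟨2 * (j : ℕ), by have := j.isLt; omega⟩ + 1)))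
      = (x ⟨0, by omega⟩ * (x ⟨0, by omega⟩ + 1)) *
        ∏ j : Fin l,
            (x ⟨2 * (j : ℕ) + 2, by have := j.isLt; omega⟩ *
              (x ⟨2 * (j : ℕ) + 2, by have := j.isLt; omega⟩ + 1)) := by
    rw [Fin.prod_univ_succ]
    have h6 : ∀ j : Fin l, x ⟨2 * ((j.succ : Fin (l+1)) : ℕ), by have := j.succ.isLt; omega⟩
        = x ⟨2 * (j : ℕ) + 2, by have := j.isLt; omega⟩ := by
      intro j
      congr 1
    have h7 : x ⟨2 * ((0 : Fin (l+1)) : ℕ), by omega⟩ = x ⟨0, by omega⟩ := by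
      congr 1
    simp only [h6, h7]
  rw [hZ (F x), hZ x, hsum, hA, hB, hC]
  set S := ∑ j, x j
  set x0 := x ⟨0, by omega⟩
  set A := ∏ j : Fin l,
            (x ⟨2 * (j : ℕ) + 1, by have := j.isLt; omega⟩ *
              (x ⟨2 * (j : ℕ) + 1, by have := j.isLt; omega⟩ + 1))
  set B := ∏ j : Fin l,
            (x ⟨2 * (j : ℕ) + 2, by have := j.isLt; omega⟩ *
              (x ⟨2 * (j : ℕ) + 2, by have := j.isLt; omega⟩ + 1))
  field_simp
  ring
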